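/- Let G be a connected weighted graph on n vertices with edge weights in [0,1] and minimal degree at least δn for some δ > 0. Then for any two disjoint sets U, W ⊆ V(G) and any integer k ≥ 1: sup_{v ∈ V(G)∖(U∪W)} P_v(τ_U < k and τ_W < k) ≤ 2k²|U||W|/(δ²n²). In particular, Close_k(U,W) := P_π(τ_U < k and τ_W < k) ≤ 2k²|U||W|/(δ²n²). -/

import Mathlib

open Finset Filter

noncomputable section

variable {V : Type*} [Fintype V] [DecidableEq V]

/-- The degree of a vertex of a weighted graph: the sum of the incident edge weights. -/
def wdeg (w : V → V → ℝ) (v : V) : ℝ := ∑ u, w v u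

/-- The stationary distribution of the random walk on a weighted graph. -/
def statDist (w : V → V → ℝ) (v : V) : ℝ := wdeg w v / ∑ u, wdeg w u

/-- The one-step transition probability of the random walk. -/
def wstep (w : V → V → ℝ) (x y : V) : ℝ := w x y / wdeg w x

/-- The probability that the random walk follows a given path of `k` steps. -/
def pathWeight (w : V → V → ℝ) {k : ℕ} (x : Fin (k + 1) → V) : ℝ :=
  ∏ i : Fin k, wstep w (x i.castSucc) (x i.succ)

open Classical in
/-- The probability that the first `k` steps of the random walk started at `u` satisfy `P`. -/
def prFrom (w : V → V → ℝ) (u : V) (k : ℕ) (P : (Fin (k + 1) → V) → Prop) : ℝ :=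
  ∑ x : Fin (k + 1) → V, if x 0 = u ∧ P x then pathWeight w x else 0

open Classical in
/-- The probability that the first `k` steps of the stationary random walk satisfy `P`. -/
def prStat (w : V → V → ℝ) (k : ℕ) (P : (Fin (k + 1) → V) → Prop) : ℝ :=
  ∑ x : Fin (k + 1) → V, if P x then statDist w (x 0) * pathWeight w x else 0

/-- `Cap_k(A)`: the probability that a stationary random walk hits `A` within `k` steps. -/
def capa (w : V → V → ℝ) (k : ℕ) (A : Set V) : ℝ :=
  prStat w k fun x => ∃ i, x i ∈ A

/-- A weighted graph: symmetric weights in `[0,1]`, no loops. -/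
def IsWeightedGraph (w : V → V → ℝ) : Prop :=
  (∀ x y, w x y = w y x) ∧ (∀ x y, w x y ∈ Set.Icc (0 : ℝ) 1) ∧ (∀ x, w x x = 0)

/-- Connectedness of a weighted graph: the graph of positive-weight edges is connected. -/
def ConnectedGraph (w : V → V → ℝ) : Prop :=
  (SimpleGraph.fromRel fun x y => 0 < w x y).Connected

/-- `G` is a `γ`-expander: `w(U, Uᶜ) ≥ γ|U|(|V|-|U|)` for all `U ⊆ V`. -/
def IsExpander (w : V → V → ℝ) (γ : ℝ) : Prop :=
  ∀ U : Finset V, γ * U.card * ((Fintype.card V : ℝ) - U.card) ≤ ∑ u ∈ U, ∑ v ∈ Uᶜ, w u v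

/-- The transition matrix of the lazy random walk. -/
def lazyStep (w : V → V → ℝ) : Matrix V V ℝ := fun x y =>
  (if x = y then (1 : ℝ) / 2 else 0) + w x y / (2 * wdeg w x)

/-- The mixing time of the lazy random walk. -/
def mixingTime (w : V → V → ℝ) : ℕ :=
  sInf {t : ℕ | ∀ x y, |(lazyStep w ^ t) x y - statDist w y| ≤ 1 / 4}

/-- `P_π(τ_A < τ_B)`: the probability that the stationary walk hits `A` strictly before `B`. -/
def prHitBefore (w : V → V → ℝ) (A B : Set V) : ℝ :=
  ⨆ k : ℕ, prStat w k fun x => ∃ i, x i ∈ A ∧ ∀ j ≤ i, x j ∉ B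

/-- `P_u(τ_A < τ_B)`: the probability that the walk from `u` hits `A` strictly before `B`. -/
def prHitBeforeFrom (w : V → V → ℝ) (u : V) (A B : Set V) : ℝ :=
  ⨆ k : ℕ, prFrom w u k fun x => ∃ i, x i ∈ A ∧ ∀ j ≤ i, x j ∉ B

/-- `P_u(τ_A < τ_B⁺)`: the walk from `u` hits `A` strictly before returning to `B`. -/
def prHitBeforeRet (w : V → V → ℝ) (u : V) (A B : Set V) : ℝ :=
  ⨆ k : ℕ, prFrom w u k fun x => ∃ i, x i ∈ A ∧ ∀ j : Fin (k + 1), 0 < (j : ℕ) → j ≤ i → x j ∉ B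

/-! Union bound over times `i, j < k` and vertices `a ∈ U`, `b ∈ W`. Every transition probability
`w x y / deg x` and every stationary mass `π a` is at most `c = 1/(δn)`, and conditioning on the step
into `b` gives `P(X_i = a, X_j = b) ≤ c · P(X_i = a) ≤ c²` for `0 < i < j` (for `i = 0` use `π a ≤ c`,
or, for a walk started outside `U ∪ W`, that the event is empty). Summing over the `k²|U||W|`
quadruples gives the bound even without the factor `2`. -/

section Paths

variable {V : Type*}

/-- `τ_A < k` for the path `x`. -/
def HitsBefore {k : ℕ} (A : Finset V) (x : Fin (k + 1) → V) : Prop :=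
  ∃ i : Fin (k + 1), (i : ℕ) < k ∧ x i ∈ A

lemma exists_pair_of_hitsBefore {k : ℕ} {U W : Finset V} (x : Fin (k + 1) → V)
    (h : HitsBefore U x ∧ HitsBefore W x) :
    ∃ p ∈ (univ : Finset (Fin k × Fin k)) ×ˢ (U ×ˢ W),
      x p.1.1.castSucc = p.2.1 ∧ x p.1.2.castSucc = p.2.2 := by
  obtain ⟨⟨i, hi, hiU⟩, ⟨j, hj, hjW⟩⟩ := h
  refine ⟨((i.castLT hi, j.castLT hj), x i, x j), ?_, ?_, ?_⟩ <;> simp [hiU, hjW]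

lemma sum_pairs_le {k : ℕ} {U W : Finset V} {c : ℝ} {f : (Fin k × Fin k) × V × V → ℝ}
    (h : ∀ p ∈ (univ : Finset (Fin k × Fin k)) ×ˢ (U ×ˢ W), f p ≤ c) :
    ∑ p ∈ (univ : Finset (Fin k × Fin k)) ×ˢ (U ×ˢ W), f p ≤ k ^ 2 * #U * #W * c :=
  (sum_le_card_nsmul _ _ _ h).trans_eq (by
    rw [nsmul_eq_mul, card_product, card_product, card_univ, Fintype.card_prod, Fintype.card_fin]
    push_cast
    ring)

end Paths

section RandomWalk

variable {V : Type*} [Fintype V] {w : V → V → ℝ} {c : ℝ}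

lemma wstep_nonneg (hw0 : ∀ x y, 0 ≤ w x y) (x y : V) : 0 ≤ wstep w x y :=
  div_nonneg (hw0 x y) (sum_nonneg fun u _ => hw0 x u)

lemma sum_wstep (hpos : ∀ v, 0 < wdeg w v) (v : V) : ∑ y, wstep w v y = 1 := by
  simp only [wstep, ← sum_div]
  exact div_self (hpos v).ne'

lemma pathWeight_nonneg (hw0 : ∀ x y, 0 ≤ w x y) {k : ℕ} (x : Fin (k + 1) → V) :
    0 ≤ pathWeight w x :=
  prod_nonneg fun _ _ => wstep_nonneg hw0 _ _

lemma pathWeight_snoc {k : ℕ} (x : Fin (k + 1) → V) (y : V) :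
    pathWeight w (Fin.snoc x y : Fin (k + 2) → V) =
      pathWeight w x * wstep w (x (Fin.last k)) y := by
  simp only [pathWeight, Fin.prod_univ_castSucc, Fin.succ_castSucc, Fin.snoc_castSucc,
    Fin.succ_last, Fin.snoc_last]

lemma statDist_nonneg (hw0 : ∀ x y, 0 ≤ w x y) (v : V) : 0 ≤ statDist w v :=
  div_nonneg (sum_nonneg fun u _ => hw0 v u) (sum_nonneg fun u _ => sum_nonneg fun t _ => hw0 u t)

lemma sum_statDist [Nonempty V] (hpos : ∀ v, 0 < wdeg w v) : ∑ v, statDist w v = 1 := by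
  simp only [statDist, ← sum_div]
  exact div_self (sum_pos (fun v _ => hpos v) univ_nonempty).ne'

variable [DecidableEq V]

open Classical in
lemma prFrom_succ (v : V) (k : ℕ) (P : (Fin (k + 2) → V) → Prop) :
    prFrom w v (k + 1) P = ∑ x : Fin (k + 1) → V, ∑ y,
      if x 0 = v ∧ P (Fin.snoc x y) then pathWeight w x * wstep w (x (Fin.last k)) y else 0 := by
  rw [prFrom, ← (Fin.snocEquiv fun _ => V).sum_comp, Fintype.sum_prod_type, sum_comm]
  refine sum_congr rfl fun x _ => sum_congr rfl fun y _ => ?_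
  have hstart : (Fin.snoc x y : Fin (k + 2) → V) 0 = x 0 :=
    Fin.snoc_castSucc (α := fun _ => V) y x 0
  simp [Fin.snocEquiv, pathWeight_snoc, hstart]

lemma prFrom_init (hpos : ∀ v, 0 < wdeg w v) (v : V) (k : ℕ)
    (P : (Fin (k + 1) → V) → Prop) :
    prFrom w v (k + 1) (fun x => P (Fin.init x)) = prFrom w v k P := by
  rw [prFrom_succ, prFrom]
  refine sum_congr rfl fun x _ => ?_
  by_cases h : x 0 = v ∧ P x <;> simp [h, ← mul_sum, sum_wstep hpos]

lemma prFrom_and_last_le (hw0 : ∀ x y, 0 ≤ w x y) (hc : ∀ x y, wstep w x y ≤ c) (v b : V)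
    (k : ℕ) (P : (Fin (k + 1) → V) → Prop) :
    prFrom w v (k + 1) (fun x => P (Fin.init x) ∧ x (Fin.last _) = b) ≤ c * prFrom w v k P := by
  rw [prFrom_succ, prFrom, mul_sum]
  refine sum_le_sum fun x _ => ?_
  by_cases h : x 0 = v ∧ P x
  · simp [h, mul_comm c, mul_le_mul_of_nonneg_left (hc _ b) (pathWeight_nonneg hw0 x)]
  · rw [if_neg h, mul_zero]
    refine le_of_eq (sum_eq_zero fun y _ => if_neg ?_)
    rintro ⟨h0, hP, -⟩
    exact h ⟨h0, by rwa [Fin.init_snoc] at hP⟩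

lemma prFrom_true (hpos : ∀ v, 0 < wdeg w v) (v : V) : ∀ k, prFrom w v k (fun _ => True) = 1
  | 0 => by
    simpa [prFrom, pathWeight] using
      card_eq_one.mpr ⟨fun _ => v, by ext x; simp [funext_iff, Fin.forall_fin_one]⟩
  | k + 1 => (prFrom_init hpos v k fun _ => True).trans (prFrom_true hpos v k)

lemma prFrom_nonneg (hw0 : ∀ x y, 0 ≤ w x y) (v : V) (k : ℕ)
    (P : (Fin (k + 1) → V) → Prop) :
    0 ≤ prFrom w v k P := by
  classical
  exact sum_nonneg fun x _ => ite_nonneg (pathWeight_nonneg hw0 x) le_rfl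

lemma prFrom_eq_zero {v : V} {k : ℕ} {P : (Fin (k + 1) → V) → Prop} (h : ∀ x, ¬ P x) :
    prFrom w v k P = 0 := by
  classical
  exact sum_eq_zero fun x _ => if_neg fun hx => h x hx.2

lemma prFrom_apply_zero_eq_and (v a : V) (k : ℕ) (Q : (Fin (k + 1) → V) → Prop) :
    prFrom w v k (fun x => x 0 = a ∧ Q x) = if v = a then prFrom w v k Q else 0 := by
  classical
  split_ifs with h
  · subst h
    simp only [prFrom, and_self_left]
  · exact sum_eq_zero fun x _ => if_neg fun hx => h (hx.1.symm.trans hx.2.1)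

lemma prFrom_le_sum_of_imp (hw0 : ∀ x y, 0 ≤ w x y) {ι : Type*} (s : Finset ι) {v : V}
    {k : ℕ} {P : (Fin (k + 1) → V) → Prop} (Q : ι → (Fin (k + 1) → V) → Prop)
    (h : ∀ x, P x → ∃ t ∈ s, Q t x) :
    prFrom w v k P ≤ ∑ t ∈ s, prFrom w v k (Q t) := by
  classical
  simp only [prFrom]
  rw [sum_comm]
  refine sum_le_sum fun x _ => ?_
  have hterm : ∀ t ∈ s, 0 ≤ if x 0 = v ∧ Q t x then pathWeight w x else 0 :=
    fun t _ => ite_nonneg (pathWeight_nonneg hw0 x) le_rfl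
  split_ifs with hx
  · obtain ⟨t, ht, hQ⟩ := h x hx.2
    exact (if_pos ⟨hx.1, hQ⟩).symm.le.trans (single_le_sum hterm ht)
  · exact sum_nonneg hterm

lemma prFrom_apply_eq_le (hw0 : ∀ x y, 0 ≤ w x y) (hpos : ∀ v, 0 < wdeg w v)
    (hc : ∀ x y, wstep w x y ≤ c) (v a : V) :
    ∀ {k : ℕ} {i : Fin (k + 1)}, i ≠ 0 → prFrom w v k (fun x => x i = a) ≤ c
  | 0, i, hi => absurd (Fin.fin_one_eq_zero i) hi
  | k + 1, i, hi => by
    rcases Fin.eq_castSucc_or_eq_last i with ⟨i, rfl⟩ | rfl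
    · exact (prFrom_init hpos v k fun x => x i = a).trans_le
        (prFrom_apply_eq_le hw0 hpos hc v a fun h => hi (h ▸ rfl))
    · simpa only [true_and, prFrom_true hpos, mul_one] using
        prFrom_and_last_le hw0 hc v a k fun _ => True

lemma prFrom_apply_eq_and_apply_eq_le (hw0 : ∀ x y, 0 ≤ w x y) (hpos : ∀ v, 0 < wdeg w v)
    (hc : ∀ x y, wstep w x y ≤ c) (v a b : V) :
    ∀ {k : ℕ} {i j : Fin (k + 1)}, i ≠ 0 → i < j →
      prFrom w v k (fun x => x i = a ∧ x j = b) ≤ c ^ 2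
  | 0, i, j, _, hij => absurd hij <| by
    rw [Fin.fin_one_eq_zero i, Fin.fin_one_eq_zero j]
    exact lt_irrefl 0
  | k + 1, i, j, hi, hij => by
    obtain ⟨i, rfl⟩ : ∃ i', i = Fin.castSucc i' :=
      ⟨i.castLT (hij.trans_le j.le_last), (Fin.castSucc_castLT _ _).symm⟩
    have hi' : i ≠ 0 := fun h => hi (h ▸ rfl)
    rcases Fin.eq_castSucc_or_eq_last j with ⟨j, rfl⟩ | rfl
    · exact (prFrom_init hpos v k fun x => x i = a ∧ x j = b).trans_le
        (prFrom_apply_eq_and_apply_eq_le hw0 hpos hc v a b hi'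
          (Fin.castSucc_lt_castSucc_iff.mp hij))
    · calc _ ≤ c * prFrom w v k (fun x => x i = a) := prFrom_and_last_le hw0 hc v b k _
        _ ≤ c * c := mul_le_mul_of_nonneg_left (prFrom_apply_eq_le hw0 hpos hc v a hi')
            ((wstep_nonneg hw0 v v).trans (hc v v))
        _ = c ^ 2 := (sq c).symm

lemma prFrom_pair_le (hw0 : ∀ x y, 0 ≤ w x y) (hpos : ∀ v, 0 < wdeg w v)
    (hc : ∀ x y, wstep w x y ≤ c) {v a b : V} (hab : a ≠ b) (hva : v ≠ a) (hvb : v ≠ b)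
    {k : ℕ} (i j : Fin (k + 1)) :
    prFrom w v k (fun x => x i = a ∧ x j = b) ≤ c ^ 2 := by
  wlog hij : i ≤ j generalizing i j a b
  · simpa only [and_comm] using this hab.symm hvb hva j i (le_of_not_ge hij)
  rcases hij.lt_or_eq with hij | rfl
  · rcases eq_or_ne i 0 with rfl | hi
    · rw [prFrom_apply_zero_eq_and, if_neg hva]
      exact sq_nonneg c
    · exact prFrom_apply_eq_and_apply_eq_le hw0 hpos hc v a b hi hij
  · rw [prFrom_eq_zero fun x hx => hab (hx.1.symm.trans hx.2)]
    exact sq_nonneg c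

lemma prStat_eq_sum (k : ℕ) (P : (Fin (k + 1) → V) → Prop) :
    prStat w k P = ∑ v, statDist w v * prFrom w v k P := by
  simp only [prStat, prFrom, mul_sum]
  rw [sum_comm]
  refine sum_congr rfl fun x _ => ?_
  by_cases h : P x <;> simp [h]

lemma prStat_apply_zero_eq_and (a : V) (k : ℕ) (Q : (Fin (k + 1) → V) → Prop) :
    prStat w k (fun x => x 0 = a ∧ Q x) = statDist w a * prFrom w a k Q := by
  simp [prStat_eq_sum, prFrom_apply_zero_eq_and]

lemma prStat_le_sum_of_imp (hw0 : ∀ x y, 0 ≤ w x y) {ι : Type*} (s : Finset ι) {k : ℕ}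
    {P : (Fin (k + 1) → V) → Prop} (Q : ι → (Fin (k + 1) → V) → Prop)
    (h : ∀ x, P x → ∃ t ∈ s, Q t x) :
    prStat w k P ≤ ∑ t ∈ s, prStat w k (Q t) :=
  calc prStat w k P = ∑ v, statDist w v * prFrom w v k P := prStat_eq_sum k P
    _ ≤ ∑ v, statDist w v * ∑ t ∈ s, prFrom w v k (Q t) := sum_le_sum fun v _ =>
        mul_le_mul_of_nonneg_left (prFrom_le_sum_of_imp hw0 s Q h) (statDist_nonneg hw0 v)
    _ = ∑ t ∈ s, prStat w k (Q t) := by simp only [prStat_eq_sum, mul_sum]; exact sum_comm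

lemma prStat_pair_le (hw0 : ∀ x y, 0 ≤ w x y) (hpos : ∀ v, 0 < wdeg w v)
    (hc : ∀ x y, wstep w x y ≤ c) (hπ : ∀ v, statDist w v ≤ c) {a b : V} (hab : a ≠ b)
    {k : ℕ} (i j : Fin (k + 1)) :
    prStat w k (fun x => x i = a ∧ x j = b) ≤ c ^ 2 := by
  wlog hij : i ≤ j generalizing i j a b
  · simpa only [and_comm] using this hab.symm j i (le_of_not_ge hij)
  have : Nonempty V := ⟨a⟩
  rcases hij.lt_or_eq with hij | rfl
  · rcases eq_or_ne i 0 with rfl | hi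
    · rw [prStat_apply_zero_eq_and, sq]
      exact mul_le_mul (hπ a) (prFrom_apply_eq_le hw0 hpos hc a b hij.ne')
        (prFrom_nonneg hw0 a k _) ((statDist_nonneg hw0 a).trans (hπ a))
    · calc _ ≤ ∑ v, statDist w v * c ^ 2 := by
            rw [prStat_eq_sum]
            exact sum_le_sum fun v _ => mul_le_mul_of_nonneg_left
              (prFrom_apply_eq_and_apply_eq_le hw0 hpos hc v a b hi hij) (statDist_nonneg hw0 v)
        _ = c ^ 2 := by rw [← sum_mul, sum_statDist hpos, one_mul]
  · rw [prStat_eq_sum]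
    simp only [prFrom_eq_zero fun x (hx : x i = a ∧ x i = b) => hab (hx.1.symm.trans hx.2),
      mul_zero, sum_const_zero]
    exact sq_nonneg c

lemma prFrom_hitsBefore_and_hitsBefore_le (hw0 : ∀ x y, 0 ≤ w x y) (hpos : ∀ v, 0 < wdeg w v)
    (hc : ∀ x y, wstep w x y ≤ c) {U W : Finset V} (hUW : Disjoint U W) {v : V}
    (hv : v ∉ U ∪ W) (k : ℕ) :
    prFrom w v k (fun x => HitsBefore U x ∧ HitsBefore W x) ≤ k ^ 2 * #U * #W * c ^ 2 :=
  (prFrom_le_sum_of_imp hw0 _ _ exists_pair_of_hitsBefore).trans <| sum_pairs_le fun p hp => by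
    simp only [mem_product, mem_univ, true_and] at hp
    exact prFrom_pair_le hw0 hpos hc (ne_of_mem_of_not_mem hp.1 (disjoint_right.mp hUW hp.2))
      (by rintro rfl; exact hv (mem_union_left _ hp.1))
      (by rintro rfl; exact hv (mem_union_right _ hp.2)) _ _

lemma prStat_hitsBefore_and_hitsBefore_le (hw0 : ∀ x y, 0 ≤ w x y) (hpos : ∀ v, 0 < wdeg w v)
    (hc : ∀ x y, wstep w x y ≤ c) (hπ : ∀ v, statDist w v ≤ c) {U W : Finset V}
    (hUW : Disjoint U W) (k : ℕ) :
    prStat w k (fun x => HitsBefore U x ∧ HitsBefore W x) ≤ k ^ 2 * #U * #W * c ^ 2 :=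
  (prStat_le_sum_of_imp hw0 _ _ exists_pair_of_hitsBefore).trans <| sum_pairs_le fun p hp => by
    simp only [mem_product, mem_univ, true_and] at hp
    exact prStat_pair_le hw0 hpos hc hπ
      (ne_of_mem_of_not_mem hp.1 (disjoint_right.mp hUW hp.2)) _ _

end RandomWalk

section DenseGraph

variable {V : Type*} [Fintype V] {w : V → V → ℝ} {δ : ℝ}

lemma wdeg_pos_of_le (hδ : 0 < δ) (hdeg : ∀ v, δ * (Fintype.card V : ℝ) ≤ wdeg w v)
    (v : V) : 0 < wdeg w v :=
  (mul_pos hδ (Nat.cast_pos.mpr (Fintype.card_pos_iff.mpr ⟨v⟩))).trans_le (hdeg v)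

lemma IsWeightedGraph.wstep_le (hw : IsWeightedGraph w) (hδ : 0 < δ)
    (hdeg : ∀ v, δ * (Fintype.card V : ℝ) ≤ wdeg w v) (x y : V) :
    wstep w x y ≤ (δ * Fintype.card V)⁻¹ := by
  rw [← one_div]
  exact div_le_div₀ zero_le_one (hw.2.1 x y).2
    (mul_pos hδ (Nat.cast_pos.mpr (Fintype.card_pos_iff.mpr ⟨x⟩))) (hdeg x)

lemma IsWeightedGraph.statDist_le (hw : IsWeightedGraph w) (hδ : 0 < δ)
    (hdeg : ∀ v, δ * (Fintype.card V : ℝ) ≤ wdeg w v) (v : V) :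
    statDist w v ≤ (δ * Fintype.card V)⁻¹ := by
  have hn : (0 : ℝ) < Fintype.card V := Nat.cast_pos.mpr (Fintype.card_pos_iff.mpr ⟨v⟩)
  have hdeg_le : wdeg w v ≤ Fintype.card V :=
    (sum_le_sum fun u _ => (hw.2.1 v u).2).trans_eq (by simp)
  have hsum : Fintype.card V * (δ * Fintype.card V) ≤ ∑ u, wdeg w u :=
    (sum_le_sum fun u _ => hdeg u).trans_eq' (by simp)
  calc statDist w v ≤ Fintype.card V / (Fintype.card V * (δ * Fintype.card V)) :=
        div_le_div₀ hn.le hdeg_le (by positivity) hsum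
    _ = (δ * Fintype.card V)⁻¹ := by field_simp

end DenseGraph

theorem closeness_bound_general {V : Type*} [Fintype V] [DecidableEq V] (w : V → V → ℝ) (δ : ℝ)
    (hδ : 0 < δ) (hW : IsWeightedGraph w)
    (hdeg : ∀ v, δ * (Fintype.card V : ℝ) ≤ wdeg w v)
    (U W : Finset V) (hUW : Disjoint U W) (k : ℕ) :
    (∀ v, v ∉ U ∪ W →
      prFrom w v k (fun x => (∃ i : Fin (k + 1), (i : ℕ) < k ∧ x i ∈ U) ∧ (∃ i : Fin (k + 1), (i : ℕ) < k ∧ x i ∈ W)) ≤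
        2 * (k : ℝ) ^ 2 * U.card * W.card / (δ ^ 2 * (Fintype.card V : ℝ) ^ 2)) ∧
    prStat w k (fun x => (∃ i : Fin (k + 1), (i : ℕ) < k ∧ x i ∈ U) ∧ (∃ i : Fin (k + 1), (i : ℕ) < k ∧ x i ∈ W)) ≤
      2 * (k : ℝ) ^ 2 * U.card * W.card / (δ ^ 2 * (Fintype.card V : ℝ) ^ 2) := by
  have hw0 : ∀ x y, 0 ≤ w x y := fun x y => (hW.2.1 x y).1
  have hpos := wdeg_pos_of_le hδ hdeg
  have hc := hW.wstep_le hδ hdeg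
  have hπ := hW.statDist_le hδ hdeg
  have hslack : (k : ℝ) ^ 2 * #U * #W * ((δ * Fintype.card V)⁻¹) ^ 2 ≤
      2 * (k : ℝ) ^ 2 * U.card * W.card / (δ ^ 2 * (Fintype.card V : ℝ) ^ 2) := by
    rw [inv_pow, mul_pow, ← div_eq_mul_inv]
    have : 0 ≤ (k : ℝ) ^ 2 * #U * #W := by positivity
    exact div_le_div_of_nonneg_right (by linarith) (by positivity)
  exact ⟨fun v hv => (prFrom_hitsBefore_and_hitsBefore_le hw0 hpos hc hUW hv k).trans hslack,
    (prStat_hitsBefore_and_hitsBefore_le hw0 hpos hc hπ hUW k).trans hslack⟩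

/-- Closeness bound: for a connected weighted graph on `n` vertices with
minimal degree at least `δn`, disjoint `U, W ⊆ V` and `k ≥ 1`:
`sup_{v ∉ U∪W} P_v(τ_U < k ∧ τ_W < k) ≤ 2k²|U||W|/(δ²n²)`, and in particular
`Close_k(U,W) = P_π(τ_U < k ∧ τ_W < k) ≤ 2k²|U||W|/(δ²n²)`. -/
theorem closeness_bound {V : Type*} [Fintype V] [DecidableEq V] (w : V → V → ℝ) (δ : ℝ)
    (hδ : 0 < δ) (hW : IsWeightedGraph w) (hconn : ConnectedGraph w)
    (hdeg : ∀ v, δ * (Fintype.card V : ℝ) ≤ wdeg w v)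
    (U W : Finset V) (hUW : Disjoint U W) (k : ℕ) (hk : 1 ≤ k) :
    (∀ v, v ∉ U ∪ W →
      prFrom w v k (fun x => (∃ i : Fin (k + 1), (i : ℕ) < k ∧ x i ∈ U) ∧ (∃ i : Fin (k + 1), (i : ℕ) < k ∧ x i ∈ W)) ≤
        2 * (k : ℝ) ^ 2 * U.card * W.card / (δ ^ 2 * (Fintype.card V : ℝ) ^ 2)) ∧
    prStat w k (fun x => (∃ i : Fin (k + 1), (i : ℕ) < k ∧ x i ∈ U) ∧ (∃ i : Fin (k + 1), (i : ℕ) < k ∧ x i ∈ W)) ≤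
      2 * (k : ℝ) ^ 2 * U.card * W.card / (δ ^ 2 * (Fintype.card V : ℝ) ^ 2) :=
  closeness_bound_general w δ hδ hW hdeg U W hUW k

end
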